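/- arXiv:1312.4774 — 2 statements merged into one kernel-verified Lean document; each statement's English description precedes it below -/
import Mathlib

section
/- Let a ∈ ℝ_{>0}^{3+3n} and let ξ > 0 satisfy ξ ≠ ξ* and F1(ξ)·Δ(ξ) > 0, and set g = (g1(ξ), ξ, g3(ξ)) ∈ ℝ_{>0}^3. Then the coset condition Θ(g,a) = 0 holds if and only if P(ξ) = 0. -/
open Finset

namespace Phos

noncomputable section

/-- Standard basis vector of `ℝ^N`, with `1`-based index `j`. -/
def e (N : ℕ) (j : ℕ) : Fin N → ℝ := fun m => if (m : ℕ) + 1 = j then 1 else 0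

/-- Standard basis vector of `ℕ^N`, with `1`-based index `j`. -/
def eN (N : ℕ) (j : ℕ) : Fin N → ℕ := fun m => if (m : ℕ) + 1 = j then 1 else 0

/-- The stoichiometric matrix `S` of the `n`-site sequential distributive
phosphorylation network.  For each `i = 1,…,n` the six columns `6(i−1)+1,…,6(i−1)+6`
are `e_{1+3i}−e_1−e_{3i−1}`, `e_1+e_{3i−1}−e_{1+3i}`, `e_1+e_{2+3i}−e_{1+3i}`,
`e_{3+3i}−e_3−e_{2+3i}`, `e_3+e_{2+3i}−e_{3+3i}`, `e_3+e_{3i−1}−e_{3+3i}`. -/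
def Smat (n : ℕ) : Matrix (Fin (3*n+3)) (Fin (6*n)) ℝ :=
  Matrix.of fun m r =>
    (![e (3*n+3) (1+3*((r : ℕ)/6+1)) - e (3*n+3) 1 - e (3*n+3) (3*((r : ℕ)/6+1)-1),
       e (3*n+3) 1 + e (3*n+3) (3*((r : ℕ)/6+1)-1) - e (3*n+3) (1+3*((r : ℕ)/6+1)),
       e (3*n+3) 1 + e (3*n+3) (2+3*((r : ℕ)/6+1)) - e (3*n+3) (1+3*((r : ℕ)/6+1)),
       e (3*n+3) (3+3*((r : ℕ)/6+1)) - e (3*n+3) 3 - e (3*n+3) (2+3*((r : ℕ)/6+1)),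
       e (3*n+3) 3 + e (3*n+3) (2+3*((r : ℕ)/6+1)) - e (3*n+3) (3+3*((r : ℕ)/6+1)),
       e (3*n+3) 3 + e (3*n+3) (3*((r : ℕ)/6+1)-1) - e (3*n+3) (3+3*((r : ℕ)/6+1))])
      ⟨(r : ℕ) % 6, Nat.mod_lt _ (by norm_num)⟩ m

/-- The rate exponent matrix `Y`: for each `i = 1,…,n` the six columns
`6(i−1)+1,…,6(i−1)+6` are `e_1+e_{3i−1}`, `e_{1+3i}`, `e_{1+3i}`,
`e_3+e_{2+3i}`, `e_{3+3i}`, `e_{3+3i}`. -/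
def Ymat (n : ℕ) : Matrix (Fin (3*n+3)) (Fin (6*n)) ℕ :=
  Matrix.of fun m r =>
    (![eN (3*n+3) 1 + eN (3*n+3) (3*((r : ℕ)/6+1)-1),
       eN (3*n+3) (1+3*((r : ℕ)/6+1)),
       eN (3*n+3) (1+3*((r : ℕ)/6+1)),
       eN (3*n+3) 3 + eN (3*n+3) (2+3*((r : ℕ)/6+1)),
       eN (3*n+3) (3+3*((r : ℕ)/6+1)),
       eN (3*n+3) (3+3*((r : ℕ)/6+1))])
      ⟨(r : ℕ) % 6, Nat.mod_lt _ (by norm_num)⟩ m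

/-- The monomial map `Φ(x)_j = ∏ₘ xₘ^{Y_{mj}}`. -/
def Phi (n : ℕ) (x : Fin (3*n+3) → ℝ) : Fin (6*n) → ℝ :=
  fun r => ∏ m, x m ^ (Ymat n m r)

/-- The conservation matrix `Z` (rows `z1, z2, z3`). -/
def Zmat (n : ℕ) : Matrix (Fin 3) (Fin (3*n+3)) ℝ :=
  Matrix.of fun r j =>
    if (r : ℕ) = 0 then (if (j : ℕ) % 3 = 0 then 1 else 0)
    else if (r : ℕ) = 1 then
      (if (j : ℕ) % 3 = 1 then 1 else if (j : ℕ) = 0 ∨ (j : ℕ) = 2 then -1 else 0)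
    else (if (j : ℕ) % 3 = 2 then 1 else 0)

/-- The `6 × 3` block `E0`. -/
def E0 : Fin 6 → Fin 3 → ℝ :=
  ![![1,0,1], ![1,0,0], ![0,0,1], ![0,1,1], ![0,1,0], ![0,0,1]]

/-- The block diagonal matrix `E` with `n` copies of `E0`. -/
def Emat (n : ℕ) : Matrix (Fin (6*n)) (Fin (3*n)) ℝ :=
  Matrix.of fun r c =>
    if (r : ℕ) / 6 = (c : ℕ) / 3 then
      E0 ⟨(r : ℕ) % 6, Nat.mod_lt _ (by norm_num)⟩ ⟨(c : ℕ) % 3, Nat.mod_lt _ (by norm_num)⟩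
    else 0

/-- The matrix `L ∈ ℤ^{(3+3n)×3}`: row `1 = (1, n−1, −1)`, row `2 = (−1, −n, 0)`,
row `3 = (1, n−2, −1)`, and for `i = 1,…,n` rows `1+3i` and `3+3i` equal
`(0, i−2, −1)` while row `2+3i = (−1, i−n, 0)`. -/
def Lmat (n : ℕ) : Matrix (Fin (3*n+3)) (Fin 3) ℤ :=
  Matrix.of fun j c =>
    if (j : ℕ) = 0 then ![1, (n : ℤ) - 1, -1] c
    else if (j : ℕ) = 1 then ![-1, -(n : ℤ), 0] c
    else if (j : ℕ) = 2 then ![1, (n : ℤ) - 2, -1] c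
    else if (j : ℕ) % 3 = 1 then ![-1, (((j : ℕ) / 3 : ℕ) : ℤ) - (n : ℤ), 0] c
    else ![0, (((j : ℕ) / 3 : ℕ) : ℤ) - 2, -1] c

/-- `g^L ∈ ℝ_{>0}^{3+3n}`, `(g^L)_j = g₁^{L_{j1}} g₂^{L_{j2}} g₃^{L_{j3}}`. -/
def gL (n : ℕ) (g : Fin 3 → ℝ) : Fin (3*n+3) → ℝ :=
  fun j => ∏ c, g c ^ (Lmat n j c)

/-- The coset condition map `Θ(g,a) = Z diag(a) (g^L − 𝟙)`. -/
def Theta (n : ℕ) (g : Fin 3 → ℝ) (a : Fin (3*n+3) → ℝ) : Fin 3 → ℝ :=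
  (Zmat n).mulVec (fun j => a j * (gL n g j - 1))

/-- The rate constants `κ(a,λ)_j = (Eλ)_j / Φ(a)_j`. -/
def kappaOf (n : ℕ) (a : Fin (3*n+3) → ℝ) (lam : Fin (3*n) → ℝ) : Fin (6*n) → ℝ :=
  fun r => (Emat n).mulVec lam r / Phi n a r

/-- `x` is a (positive) steady state of `ẋ = S diag(κ) Φ(x)`. -/
def isSteady (n : ℕ) (κ : Fin (6*n) → ℝ) (x : Fin (3*n+3) → ℝ) : Prop :=
  (Smat n).mulVec (fun r => κ r * Phi n x r) = 0

/-- The `1`-based component `a_j` of a vector `a ∈ ℝ^{3+3n}`. -/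
def av (n : ℕ) (a : Fin (3*n+3) → ℝ) (j : ℕ) : ℝ :=
  if h : j - 1 < 3*n+3 then a ⟨j - 1, h⟩ else 0

/-- `ω1 = Σ_{k=0}^n a_{1+3k}`. -/
def om1 (n : ℕ) (a : Fin (3*n+3) → ℝ) : ℝ := ∑ k ∈ Finset.range (n+1), av n a (1+3*k)

/-- `ω2 = −a₁ − a₃ + Σ_{k=0}^n a_{2+3k}`. -/
def om2 (n : ℕ) (a : Fin (3*n+3) → ℝ) : ℝ :=
  -(av n a 1) - av n a 3 + ∑ k ∈ Finset.range (n+1), av n a (2+3*k)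

/-- `ω3 = Σ_{k=0}^n a_{3+3k}`. -/
def om3 (n : ℕ) (a : Fin (3*n+3) → ℝ) : ℝ := ∑ k ∈ Finset.range (n+1), av n a (3+3*k)

/-- `Ω2(ξ) = Σ_{k=0}^n a_{2+3k} ξ^k`. -/
def Om2 (n : ℕ) (a : Fin (3*n+3) → ℝ) (ξ : ℝ) : ℝ :=
  ∑ k ∈ Finset.range (n+1), av n a (2+3*k) * ξ ^ k

/-- `Ω4(ξ) = Σ_{k=1}^n a_{1+3k} ξ^{k−1}`. -/
def Om4 (n : ℕ) (a : Fin (3*n+3) → ℝ) (ξ : ℝ) : ℝ :=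
  ∑ k ∈ Finset.Icc 1 n, av n a (1+3*k) * ξ ^ (k-1)

/-- `Ω6(ξ) = Σ_{k=1}^n a_{3+3k} ξ^{k−1}`. -/
def Om6 (n : ℕ) (a : Fin (3*n+3) → ℝ) (ξ : ℝ) : ℝ :=
  ∑ k ∈ Finset.Icc 1 n, av n a (3+3*k) * ξ ^ (k-1)

/-- `Δ(ξ) = (a₁/ω1)ξ − a₃/ω3`. -/
def Dlt (n : ℕ) (a : Fin (3*n+3) → ℝ) (ξ : ℝ) : ℝ :=
  av n a 1 / om1 n a * ξ - av n a 3 / om3 n a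

/-- `ξ* = (ω1 a₃)/(a₁ ω3)`. -/
def xistar (n : ℕ) (a : Fin (3*n+3) → ℝ) : ℝ :=
  om1 n a * av n a 3 / (av n a 1 * om3 n a)

/-- `F1(ξ) = Ω6(ξ)/ω3 − Ω4(ξ)/ω1`. -/
def F1 (n : ℕ) (a : Fin (3*n+3) → ℝ) (ξ : ℝ) : ℝ :=
  Om6 n a ξ / om3 n a - Om4 n a ξ / om1 n a

/-- `F3(ξ) = (a₁ξ/ω1)(Ω6(ξ)/ω3) − (a₃/ω3)(Ω4(ξ)/ω1)`. -/
def F3 (n : ℕ) (a : Fin (3*n+3) → ℝ) (ξ : ℝ) : ℝ :=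
  av n a 1 * ξ / om1 n a * (Om6 n a ξ / om3 n a) - av n a 3 / om3 n a * (Om4 n a ξ / om1 n a)

/-- `A(ξ) = (Ω4(ξ)+Ω6(ξ))Ω2(ξ)`. -/
def Ap (n : ℕ) (a : Fin (3*n+3) → ℝ) (ξ : ℝ) : ℝ := (Om4 n a ξ + Om6 n a ξ) * Om2 n a ξ

/-- `B(ξ) = (a₁ξ + a₃)Ω2(ξ) − ω2 ξ (Ω4(ξ)+Ω6(ξ))`. -/
def Bp (n : ℕ) (a : Fin (3*n+3) → ℝ) (ξ : ℝ) : ℝ :=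
  (av n a 1 * ξ + av n a 3) * Om2 n a ξ - om2 n a * ξ * (Om4 n a ξ + Om6 n a ξ)

/-- `C(ξ) = ξ(a₁ξ + a₃)(ω1+ω2+ω3)`. -/
def Cp (n : ℕ) (a : Fin (3*n+3) → ℝ) (ξ : ℝ) : ℝ :=
  ξ * (av n a 1 * ξ + av n a 3) * (om1 n a + om2 n a + om3 n a)

/-- `P(ξ) = A(ξ)Δ(ξ)² + B(ξ)Δ(ξ)F1(ξ) − C(ξ)F1(ξ)²`. -/
def Pp (n : ℕ) (a : Fin (3*n+3) → ℝ) (ξ : ℝ) : ℝ :=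
  Ap n a ξ * (Dlt n a ξ)^2 + Bp n a ξ * Dlt n a ξ * F1 n a ξ - Cp n a ξ * (F1 n a ξ)^2

/-- `θ(ξ) = 2C(ξ)F1(ξ) − Δ(ξ)[B(ξ) + (B(ξ)² + 4A(ξ)C(ξ))^{1/2}]`. -/
def thetaFun (n : ℕ) (a : Fin (3*n+3) → ℝ) (ξ : ℝ) : ℝ :=
  2 * Cp n a ξ * F1 n a ξ -
    Dlt n a ξ * (Bp n a ξ + Real.sqrt ((Bp n a ξ)^2 + 4 * Ap n a ξ * Cp n a ξ))

/-- `g1(ξ) = ξ^{1−n} F1(ξ)/Δ(ξ)`. -/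
def g1f (n : ℕ) (a : Fin (3*n+3) → ℝ) (ξ : ℝ) : ℝ :=
  ξ ^ ((1 : ℤ) - (n : ℤ)) * F1 n a ξ / Dlt n a ξ

/-- `g3(ξ) = ξ^{−1} F3(ξ)/Δ(ξ)`. -/
def g3f (n : ℕ) (a : Fin (3*n+3) → ℝ) (ξ : ℝ) : ℝ :=
  ξ⁻¹ * F3 n a ξ / Dlt n a ξ

/-- The candidate second steady state `b = diag(g^L) a` built from a zero `ξ`
of the determining equation, with `g = (g1(ξ), ξ, g3(ξ))`. -/
def bOf (n : ℕ) (a : Fin (3*n+3) → ℝ) (ξ : ℝ) : Fin (3*n+3) → ℝ :=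
  fun j => gL n ![g1f n a ξ, ξ, g3f n a ξ] j * a j

end

end Phos

/-!
Write `g = (y^{1-n} p, y, y⁻¹ q)`. Every entry of `g^L` is then a monomial in `y, p, q`, and the
three coordinates of `Θ(g, a)` are `(a₁ y p + Ω₄(y))/q − ω₁`, `−(a₁ y + a₃) p/q + Ω₂(y)/(p y) − ω₂`
and `(a₃ p + Ω₆(y))/q − ω₃`. The point `(g₁(ξ), ξ, g₃(ξ))` is `y = ξ`, `p = F₁/Δ`, `q = F₃/Δ`, and
the identities `ω₁ F₃ = Δ Ω₄ + a₁ ξ F₁`, `ω₃ F₃ = Δ Ω₆ + a₃ F₁` say that the first and third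
coordinates vanish there. The second becomes `Q/(ξ F₁ F₃)`, and eliminating `F₃` with the sum of the
two identities gives `P = (ω₁ + ω₃) Q`. The denominators are nonzero because `a > 0`, `F₁ Δ > 0`
and `ω₁ F₃ Δ = Δ² Ω₄ + a₁ ξ F₁ Δ > 0`.
-/

namespace Phos

theorem sum_range_succ_eq_add_sum_Icc {M : Type*} [AddCommMonoid M] (f : ℕ → M) (n : ℕ) :
    ∑ k ∈ range (n + 1), f k = f 0 + ∑ k ∈ Icc 1 n, f k := by
  rw [sum_range_eq_add_Ico f (Nat.succ_pos n), ← Ico_add_one_right_eq_Icc]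
  rfl

theorem sum_range_three_mul {M : Type*} [AddCommMonoid M] (f : ℕ → M) (m : ℕ) :
    ∑ j ∈ range (3 * m), f j
      = ∑ k ∈ range m, (f (3 * k) + f (3 * k + 1) + f (3 * k + 2)) := by
  induction m with
  | zero => simp
  | succ m ih =>
    rw [show 3 * (m + 1) = 3 * m + 2 + 1 by ring, sum_range_succ, sum_range_succ, sum_range_succ,
      ih, sum_range_succ]
    abel

theorem zpow_sub_two_mul_self {G₀ : Type*} [GroupWithZero G₀] {y : G₀} (hy : y ≠ 0) {k : ℕ}
    (hk : 1 ≤ k) : y ^ ((k : ℤ) - 2) * y = y ^ (k - 1) := by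
  rw [← zpow_add_one₀ hy, ← zpow_natCast, Nat.cast_sub hk]
  ring_nf

theorem fin_three_eq_zero_iff_apply_one {M : Type*} [Zero M] {v : Fin 3 → M} (h0 : v 0 = 0)
    (h2 : v 2 = 0) : v = 0 ↔ v 1 = 0 := by
  refine ⟨fun h => by rw [h, Pi.zero_apply], fun h1 => ?_⟩
  ext r
  fin_cases r <;> assumption

theorem av_succ (n : ℕ) (u : Fin (3*n+3) → ℝ) (j : Fin (3*n+3)) : av n u (j + 1) = u j := by
  simp [av]

theorem sum_univ_eq_sum_range_av (n : ℕ) (u : Fin (3*n+3) → ℝ) :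
    ∑ j, u j
      = ∑ k ∈ range (n + 1), (av n u (1 + 3 * k) + av n u (2 + 3 * k) + av n u (3 + 3 * k)) := by
  calc ∑ j, u j = ∑ m ∈ range (3 * (n + 1)), av n u (m + 1) := by
        rw [← Fin.sum_univ_eq_sum_range (fun m => av n u (m + 1))]
        simp only [av_succ]
        rfl
    _ = _ := by
        rw [sum_range_three_mul]
        exact sum_congr rfl fun k _ => by ring_nf

theorem av_mul_sub_one (n : ℕ) (a w : Fin (3*n+3) → ℝ) (m : ℕ) :
    av n (fun j => a j * (w j - 1)) m = av n a m * (av n w m - 1) := by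
  unfold av; split_ifs <;> simp

theorem Zmat_mulVec_zero (n : ℕ) (u : Fin (3*n+3) → ℝ) :
    (Zmat n).mulVec u 0 = ∑ k ∈ range (n + 1), av n u (1 + 3 * k) := by
  rw [Matrix.mulVec, dotProduct, sum_univ_eq_sum_range_av]
  refine sum_congr rfl fun k hk => ?_
  have := mem_range.1 hk
  simp [av, Zmat]

theorem Zmat_mulVec_one (n : ℕ) (u : Fin (3*n+3) → ℝ) :
    (Zmat n).mulVec u 1 = -av n u 1 - av n u 3 + ∑ k ∈ range (n + 1), av n u (2 + 3 * k) := by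
  set v : Fin (3*n+3) → ℝ := fun j => Zmat n 1 j * u j
  have hterm : ∀ k ∈ range n, av n v (1 + 3 * (k + 1)) + av n v (2 + 3 * (k + 1))
      + av n v (3 + 3 * (k + 1)) = av n u (2 + 3 * (k + 1)) := fun k hk => by
    have := mem_range.1 hk
    simp [v, av, Zmat, show 3 * (k + 1) ≠ 2 by omega]
  rw [Matrix.mulVec, dotProduct, sum_univ_eq_sum_range_av, sum_range_succ', sum_range_succ',
    sum_congr rfl hterm]
  simp [av, Zmat]
  ring

theorem Zmat_mulVec_two (n : ℕ) (u : Fin (3*n+3) → ℝ) :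
    (Zmat n).mulVec u 2 = ∑ k ∈ range (n + 1), av n u (3 + 3 * k) := by
  rw [Matrix.mulVec, dotProduct, sum_univ_eq_sum_range_av]
  refine sum_congr rfl fun k hk => ?_
  have := mem_range.1 hk
  simp [av, Zmat]

section gL

variable (n : ℕ) (x y z : ℝ)

theorem av_gL_one : av n (gL n ![x, y, z]) 1 = x * y ^ ((n : ℤ) - 1) * z⁻¹ := by
  simp [av, gL, Lmat, Fin.prod_univ_three]

theorem av_gL_three : av n (gL n ![x, y, z]) 3 = x * y ^ ((n : ℤ) - 2) * z⁻¹ := by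
  simp [av, gL, Lmat, Fin.prod_univ_three]

theorem av_gL_two_add_three_mul {k : ℕ} (hk : k ≤ n) :
    av n (gL n ![x, y, z]) (2 + 3 * k) = x⁻¹ * y ^ ((k : ℤ) - n) := by
  rcases Nat.eq_zero_or_pos k with rfl | hk0
  · simp [av, gL, Lmat, Fin.prod_univ_three]
  · have hlt : 1 + 3 * k < 3 * n + 3 := by omega
    have hdiv : (1 + 3 * (k : ℤ)) / 3 = k := by omega
    simp [av, gL, Lmat, Fin.prod_univ_three, hlt, hdiv, hk0.ne', show 1 + 3 * k ≠ 2 by omega]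

theorem av_gL_one_add_three_mul {k : ℕ} (hk1 : 1 ≤ k) (hk : k ≤ n) :
    av n (gL n ![x, y, z]) (1 + 3 * k) = y ^ ((k : ℤ) - 2) * z⁻¹ := by
  have hlt : 3 * k < 3 * n + 3 := by omega
  simp [av, gL, Lmat, Fin.prod_univ_three, hlt, show k ≠ 0 by omega, show 3 * k ≠ 2 by omega]

theorem av_gL_three_add_three_mul {k : ℕ} (hk1 : 1 ≤ k) (hk : k ≤ n) :
    av n (gL n ![x, y, z]) (3 + 3 * k) = y ^ ((k : ℤ) - 2) * z⁻¹ := by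
  have hlt : 2 + 3 * k < 3 * n + 3 := by omega
  have hdiv : (2 + 3 * (k : ℤ)) / 3 = k := by omega
  simp [av, gL, Lmat, Fin.prod_univ_three, hlt, hdiv, show k ≠ 0 by omega,
    show 2 + 3 * k ≠ 1 by omega]

end gL

noncomputable def gpq (n : ℕ) (y p q : ℝ) : Fin 3 → ℝ :=
  ![y ^ ((1 : ℤ) - n) * p, y, y⁻¹ * q]

section Coordinates

variable (n : ℕ) {y : ℝ} (p q : ℝ)

theorem av_gL_gpq_one (hy : y ≠ 0) : av n (gL n (gpq n y p q)) 1 = p * y / q := by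
  have h : y ^ ((1 : ℤ) - n) * y ^ ((n : ℤ) - 1) = 1 := by
    rw [← zpow_add₀ hy]; ring_nf; exact zpow_zero y
  rw [gpq, av_gL_one, mul_inv, inv_inv]
  linear_combination p * y / q * h

theorem av_gL_gpq_three (hy : y ≠ 0) : av n (gL n (gpq n y p q)) 3 = p / q := by
  have h : y ^ ((1 : ℤ) - n) * y ^ ((n : ℤ) - 2) * y = 1 := by
    rw [← zpow_add₀ hy, ← zpow_add_one₀ hy]; ring_nf; exact zpow_zero y
  rw [gpq, av_gL_three, mul_inv, inv_inv]
  linear_combination p / q * h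

theorem av_gL_gpq_two_add_three_mul (hy : y ≠ 0) {k : ℕ} (hk : k ≤ n) :
    av n (gL n (gpq n y p q)) (2 + 3 * k) = y ^ k / (p * y) := by
  have h : y ^ ((k : ℤ) - n) * y = y ^ k * y ^ ((1 : ℤ) - n) := by
    rw [← zpow_add_one₀ hy, ← zpow_natCast, ← zpow_add₀ hy]; ring_nf
  have : y ^ ((1 : ℤ) - n) ≠ 0 := zpow_ne_zero _ hy
  rw [gpq, av_gL_two_add_three_mul _ _ _ _ hk]
  field_simp
  linear_combination p⁻¹ * h

theorem av_gL_gpq_one_add_three_mul (hy : y ≠ 0) {k : ℕ} (hk1 : 1 ≤ k) (hk : k ≤ n) :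
    av n (gL n (gpq n y p q)) (1 + 3 * k) = y ^ (k - 1) / q := by
  rw [gpq, av_gL_one_add_three_mul _ _ _ _ hk1 hk, ← zpow_sub_two_mul_self hy hk1]
  field_simp

theorem av_gL_gpq_three_add_three_mul (hy : y ≠ 0) {k : ℕ} (hk1 : 1 ≤ k) (hk : k ≤ n) :
    av n (gL n (gpq n y p q)) (3 + 3 * k) = y ^ (k - 1) / q := by
  rw [gpq, av_gL_three_add_three_mul _ _ _ _ hk1 hk, ← zpow_sub_two_mul_self hy hk1]
  field_simp

variable {n} (a : Fin (3*n+3) → ℝ)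

theorem Theta_gpq_zero (hy : y ≠ 0) :
    Theta n (gpq n y p q) a 0 = (av n a 1 * y * p + Om4 n a y) / q - om1 n a := by
  have hsum : ∑ k ∈ Icc 1 n, av n a (1 + 3 * k) * (av n (gL n (gpq n y p q)) (1 + 3 * k) - 1)
      = ∑ k ∈ Icc 1 n, av n a (1 + 3 * k) * (y ^ (k - 1) / q - 1) :=
    sum_congr rfl fun k hk => by
      rw [av_gL_gpq_one_add_three_mul _ _ _ hy (mem_Icc.1 hk).1 (mem_Icc.1 hk).2]
  rw [Theta, Zmat_mulVec_zero]
  simp only [av_mul_sub_one]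
  rw [sum_range_succ_eq_add_sum_Icc, hsum, om1, sum_range_succ_eq_add_sum_Icc, Om4]
  simp only [mul_zero, add_zero, av_gL_gpq_one _ _ _ hy, mul_sub, mul_one, sum_sub_distrib,
    ← mul_div_assoc, ← sum_div]
  ring

theorem Theta_gpq_two (hy : y ≠ 0) :
    Theta n (gpq n y p q) a 2 = (av n a 3 * p + Om6 n a y) / q - om3 n a := by
  have hsum : ∑ k ∈ Icc 1 n, av n a (3 + 3 * k) * (av n (gL n (gpq n y p q)) (3 + 3 * k) - 1)
      = ∑ k ∈ Icc 1 n, av n a (3 + 3 * k) * (y ^ (k - 1) / q - 1) :=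
    sum_congr rfl fun k hk => by
      rw [av_gL_gpq_three_add_three_mul _ _ _ hy (mem_Icc.1 hk).1 (mem_Icc.1 hk).2]
  rw [Theta, Zmat_mulVec_two]
  simp only [av_mul_sub_one]
  rw [sum_range_succ_eq_add_sum_Icc, hsum, om3, sum_range_succ_eq_add_sum_Icc, Om6]
  simp only [mul_zero, add_zero, av_gL_gpq_three _ _ _ hy, mul_sub, mul_one, sum_sub_distrib,
    ← mul_div_assoc, ← sum_div]
  ring

theorem Theta_gpq_one (hy : y ≠ 0) :
    Theta n (gpq n y p q) a 1
      = -(av n a 1 * y + av n a 3) * p / q + Om2 n a y / (p * y) - om2 n a := by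
  have hsum :
      ∑ k ∈ range (n + 1), av n a (2 + 3 * k) * (av n (gL n (gpq n y p q)) (2 + 3 * k) - 1)
        = ∑ k ∈ range (n + 1), av n a (2 + 3 * k) * (y ^ k / (p * y) - 1) :=
    sum_congr rfl fun k hk => by
      rw [av_gL_gpq_two_add_three_mul _ _ _ hy (Nat.lt_succ_iff.1 (mem_range.1 hk))]
  rw [Theta, Zmat_mulVec_one]
  simp only [av_mul_sub_one]
  rw [hsum, om2, Om2, av_gL_gpq_one _ _ _ hy, av_gL_gpq_three _ _ _ hy]
  simp only [mul_sub, mul_one, sum_sub_distrib, ← mul_div_assoc, ← sum_div]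
  ring

end Coordinates

section Algebra

variable (n : ℕ) (a : Fin (3*n+3) → ℝ) (ξ : ℝ)

noncomputable def Qp : ℝ :=
  F3 n a ξ * (Om2 n a ξ * Dlt n a ξ - om2 n a * ξ * F1 n a ξ)
    - (av n a 1 * ξ + av n a 3) * ξ * F1 n a ξ ^ 2

variable {n a}

theorem om1_mul_F3 (h1 : om1 n a ≠ 0) (h3 : om3 n a ≠ 0) :
    om1 n a * F3 n a ξ = Dlt n a ξ * Om4 n a ξ + av n a 1 * ξ * F1 n a ξ := by
  simp only [F3, F1, Dlt]
  field_simp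
  ring

theorem om3_mul_F3 (h1 : om1 n a ≠ 0) (h3 : om3 n a ≠ 0) :
    om3 n a * F3 n a ξ = Dlt n a ξ * Om6 n a ξ + av n a 3 * F1 n a ξ := by
  simp only [F3, F1, Dlt]
  field_simp
  ring

theorem Pp_eq_mul_Qp (h1 : om1 n a ≠ 0) (h3 : om3 n a ≠ 0) :
    Pp n a ξ = (om1 n a + om3 n a) * Qp n a ξ := by
  simp only [Pp, Ap, Bp, Cp, Qp]
  linear_combination (om2 n a * ξ * F1 n a ξ - Om2 n a ξ * Dlt n a ξ)
    * (om1_mul_F3 ξ h1 h3 + om3_mul_F3 ξ h1 h3)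

end Algebra

section Positivity

variable {n : ℕ} {a : Fin (3*n+3) → ℝ}

theorem av_nonneg (ha : ∀ j, 0 < a j) (m : ℕ) : 0 ≤ av n a m := by
  unfold av; split_ifs
  exacts [(ha _).le, le_rfl]

theorem av_pos (ha : ∀ j, 0 < a j) {m : ℕ} (hm : m ≤ 3 * n + 3) : 0 < av n a m := by
  unfold av; rw [dif_pos (by omega)]
  exact ha _

theorem om1_pos (ha : ∀ j, 0 < a j) : 0 < om1 n a :=
  sum_pos' (fun _ _ => av_nonneg ha _) ⟨0, by simp, av_pos ha (by omega)⟩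

theorem om3_pos (ha : ∀ j, 0 < a j) : 0 < om3 n a :=
  sum_pos' (fun _ _ => av_nonneg ha _) ⟨0, by simp, av_pos ha (by omega)⟩

theorem Om4_nonneg (ha : ∀ j, 0 < a j) {ξ : ℝ} (hξ : 0 ≤ ξ) : 0 ≤ Om4 n a ξ :=
  sum_nonneg fun _ _ => mul_nonneg (av_nonneg ha _) (pow_nonneg hξ _)

theorem F3_mul_Dlt_pos (ha : ∀ j, 0 < a j) {ξ : ℝ} (hξ : 0 < ξ)
    (hadm : 0 < F1 n a ξ * Dlt n a ξ) : 0 < F3 n a ξ * Dlt n a ξ := by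
  have h : om1 n a * (F3 n a ξ * Dlt n a ξ)
      = Dlt n a ξ ^ 2 * Om4 n a ξ + av n a 1 * ξ * (F1 n a ξ * Dlt n a ξ) := by
    linear_combination Dlt n a ξ * om1_mul_F3 ξ (om1_pos ha).ne' (om3_pos ha).ne'
  refine pos_of_mul_pos_right ?_ (om1_pos ha).le
  rw [h]
  exact add_pos_of_nonneg_of_pos (mul_nonneg (sq_nonneg _) (Om4_nonneg ha hξ.le))
    (mul_pos (mul_pos (av_pos ha (by omega)) hξ) hadm)

end Positivity

section Admissible

variable {n : ℕ} {a : Fin (3*n+3) → ℝ} {ξ : ℝ}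

theorem g_eq_gpq : ![g1f n a ξ, ξ, g3f n a ξ]
    = gpq n ξ (F1 n a ξ / Dlt n a ξ) (F3 n a ξ / Dlt n a ξ) := by
  simp only [gpq, g1f, g3f, mul_div_assoc]

theorem Theta_g1f_g3f_zero (hξ : ξ ≠ 0) (hΔ : Dlt n a ξ ≠ 0) (hF3 : F3 n a ξ ≠ 0)
    (h1 : om1 n a ≠ 0) (h3 : om3 n a ≠ 0) :
    Theta n ![g1f n a ξ, ξ, g3f n a ξ] a 0 = 0 := by
  rw [g_eq_gpq, Theta_gpq_zero _ _ _ hξ]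
  field_simp
  linear_combination -om1_mul_F3 ξ h1 h3

theorem Theta_g1f_g3f_two (hξ : ξ ≠ 0) (hΔ : Dlt n a ξ ≠ 0) (hF3 : F3 n a ξ ≠ 0)
    (h1 : om1 n a ≠ 0) (h3 : om3 n a ≠ 0) :
    Theta n ![g1f n a ξ, ξ, g3f n a ξ] a 2 = 0 := by
  rw [g_eq_gpq, Theta_gpq_two _ _ _ hξ]
  field_simp
  linear_combination -om3_mul_F3 ξ h1 h3

theorem Theta_g1f_g3f_one (hξ : ξ ≠ 0) (hΔ : Dlt n a ξ ≠ 0) (hF1 : F1 n a ξ ≠ 0)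
    (hF3 : F3 n a ξ ≠ 0) :
    Theta n ![g1f n a ξ, ξ, g3f n a ξ] a 1 = Qp n a ξ / (ξ * F1 n a ξ * F3 n a ξ) := by
  rw [g_eq_gpq, Theta_gpq_one _ _ _ hξ, Qp]
  field_simp
  ring

end Admissible

theorem coset_condition_iff_P_eq_zero_general (n : ℕ)
    (a : Fin (3*n+3) → ℝ) (ha : ∀ j, 0 < a j)
    (ξ : ℝ) (hξ : 0 < ξ)
    (hadm : 0 < F1 n a ξ * Dlt n a ξ) :
    Theta n ![g1f n a ξ, ξ, g3f n a ξ] a = 0 ↔ Pp n a ξ = 0 := by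
  have hΔ : Dlt n a ξ ≠ 0 := right_ne_zero_of_mul hadm.ne'
  have hF1 : F1 n a ξ ≠ 0 := left_ne_zero_of_mul hadm.ne'
  have hF3 : F3 n a ξ ≠ 0 := left_ne_zero_of_mul (F3_mul_Dlt_pos ha hξ hadm).ne'
  have hω1 := (om1_pos ha).ne'
  have hω3 := (om3_pos ha).ne'
  rw [fin_three_eq_zero_iff_apply_one (Theta_g1f_g3f_zero hξ.ne' hΔ hF3 hω1 hω3)
      (Theta_g1f_g3f_two hξ.ne' hΔ hF3 hω1 hω3),
    Theta_g1f_g3f_one hξ.ne' hΔ hF1 hF3, div_eq_zero_iff,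
    or_iff_left (mul_ne_zero (mul_ne_zero hξ.ne' hF1) hF3), Pp_eq_mul_Qp ξ hω1 hω3,
    mul_eq_zero_iff_left (add_pos (om1_pos ha) (om3_pos ha)).ne']

/-- For an admissible `ξ` (`ξ > 0`, `ξ ≠ ξ*`, `F1(ξ)Δ(ξ) > 0`)
and `g = (g1(ξ), ξ, g3(ξ)) ∈ ℝ_{>0}³`, the coset condition `Θ(g,a) = 0`
holds iff `P(ξ) = 0`. -/
theorem coset_condition_iff_P_eq_zero (n : ℕ) (hn : 2 ≤ n)
    (a : Fin (3*n+3) → ℝ) (ha : ∀ j, 0 < a j)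
    (ξ : ℝ) (hξ : 0 < ξ) (hne : ξ ≠ xistar n a)
    (hadm : 0 < F1 n a ξ * Dlt n a ξ) :
    Theta n ![g1f n a ξ, ξ, g3f n a ξ] a = 0 ↔ Pp n a ξ = 0 :=
  coset_condition_iff_P_eq_zero_general n a ha ξ hξ hadm

end Phos
end

section
/- Let a ∈ ℝ_{>0}^{3+3n} and let ξ > 0 with ξ ≠ ξ*. Then θ(ξ) = 0 if and only if both P(ξ) = 0 and F1(ξ)·Δ(ξ) > 0 hold. (In particular, every positive zero of θ different from ξ* is an admissible zero of P.) -/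
open Finset

namespace Phos

private lemma key_abstract (A B C D F : ℝ) (hA : 0 < A) (hC : 0 < C) (hD : D ≠ 0) :
    2 * C * F - D * (B + Real.sqrt (B^2 + 4*A*C)) = 0 ↔
      (A * D^2 + B * D * F - C * F^2 = 0 ∧ 0 < F * D) := by
  set R := Real.sqrt (B^2 + 4*A*C) with hRdef
  have hpos : 0 < B^2 + 4*A*C := by positivity
  have hR2 : R^2 = B^2 + 4*A*C := Real.sq_sqrt hpos.le
  have hR0 : 0 < R := Real.sqrt_pos.mpr hpos
  have hD2 : 0 < D^2 := by positivity
  constructor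
  · intro hθ
    have hBR : 0 < B + R := by nlinarith [sq_nonneg (B + R), mul_pos hA hC]
    have key2 : 2*C*(F*D) = D^2*(B+R) := by linear_combination D*hθ
    have hFD : 0 < F * D := by nlinarith [mul_pos hD2 hBR]
    refine ⟨?_, hFD⟩
    have h1 : D * R = 2*C*F - D*B := by linear_combination -hθ
    have h2 : (D*R)^2 = (2*C*F - D*B)^2 := by rw [h1]
    have h3 : 4*C*(A*D^2 + B*D*F - C*F^2) = 0 := by
      linear_combination h2 - D^2 * hR2
    have hC4 : (4*C) ≠ 0 := by positivity
    exact (mul_eq_zero.mp h3).resolve_left hC4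
  · rintro ⟨hP, hFD⟩
    have hF : F ≠ 0 := fun h => by simp [h] at hFD
    have hY : F*(2*C*F - D*B) = C*F^2 + A*D^2 := by linear_combination -hP
    have hYpos : 0 < C*F^2 + A*D^2 := by positivity
    have hXpos : 0 < F*D*R := mul_pos hFD hR0
    have hXY : (F*D*R)^2 = (F*(2*C*F - D*B))^2 := by
      linear_combination F^2*D^2*hR2 + 4*C*F^2*hP
    have hdiff : (F*D*R - F*(2*C*F-D*B))*(F*D*R + F*(2*C*F-D*B)) = 0 := by
      linear_combination hXY
    rcases mul_eq_zero.mp hdiff with h | h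
    · have h5 : F*(D*R) = F*(2*C*F - D*B) := by linear_combination h
      have h6 : D*R = 2*C*F - D*B := mul_left_cancel₀ hF h5
      linear_combination -h6
    · exfalso; rw [hY] at h; nlinarith

/-- For `ξ > 0` with `ξ ≠ ξ*`: `θ(ξ) = 0` iff both `P(ξ) = 0`
and `F1(ξ)Δ(ξ) > 0` hold (every positive zero of `θ` different from `ξ*`
is an admissible zero of `P`). -/
theorem theta_zero_iff_admissible_zero (n : ℕ) (hn : 2 ≤ n)
    (a : Fin (3*n+3) → ℝ) (ha : ∀ j, 0 < a j)
    (ξ : ℝ) (hξ : 0 < ξ) (hne : ξ ≠ xistar n a) :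
    thetaFun n a ξ = 0 ↔ (Pp n a ξ = 0 ∧ 0 < F1 n a ξ * Dlt n a ξ) := by
  have hav : ∀ j : ℕ, j - 1 < 3*n+3 → 0 < av n a j := by
    intro j h; rw [av, dif_pos h]; exact ha _
  have ha1 : 0 < av n a 1 := hav 1 (by omega)
  have ha3 : 0 < av n a 3 := hav 3 (by omega)
  have hom1 : 0 < om1 n a := by
    rw [om1]; apply Finset.sum_pos
    · intro k hk; exact hav _ (by simp only [Finset.mem_range] at hk; omega)
    · exact ⟨0, by simp⟩
  have hom3 : 0 < om3 n a := by
    rw [om3]; apply Finset.sum_pos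
    · intro k hk; exact hav _ (by simp only [Finset.mem_range] at hk; omega)
    · exact ⟨0, by simp⟩
  have hS2 : 0 < ∑ k ∈ Finset.range (n+1), av n a (2+3*k) := by
    apply Finset.sum_pos
    · intro k hk; exact hav _ (by simp only [Finset.mem_range] at hk; omega)
    · exact ⟨0, by simp⟩
  have hom1ge : av n a 1 ≤ om1 n a := by
    rw [om1]
    have := Finset.single_le_sum (f := fun k => av n a (1+3*k))
      (fun i hi => (hav _ (by simp only [Finset.mem_range] at hi; omega)).le)
      (Finset.mem_range.mpr (Nat.succ_pos n))
    simpa using this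
  have hom3ge : av n a 3 ≤ om3 n a := by
    rw [om3]
    have := Finset.single_le_sum (f := fun k => av n a (3+3*k))
      (fun i hi => (hav _ (by simp only [Finset.mem_range] at hi; omega)).le)
      (Finset.mem_range.mpr (Nat.succ_pos n))
    simpa using this
  have homsum : 0 < om1 n a + om2 n a + om3 n a := by
    rw [om2]; linarith
  have hOm2 : 0 < Om2 n a ξ := by
    rw [Om2]; apply Finset.sum_pos
    · intro k hk
      exact mul_pos (hav _ (by simp only [Finset.mem_range] at hk; omega)) (pow_pos hξ k)
    · exact ⟨0, by simp⟩
  have hOm4 : 0 < Om4 n a ξ := by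
    rw [Om4]; apply Finset.sum_pos
    · intro k hk
      exact mul_pos (hav _ (by simp only [Finset.mem_Icc] at hk; omega)) (pow_pos hξ _)
    · exact ⟨1, Finset.mem_Icc.mpr ⟨le_refl 1, by omega⟩⟩
  have hOm6 : 0 < Om6 n a ξ := by
    rw [Om6]; apply Finset.sum_pos
    · intro k hk
      exact mul_pos (hav _ (by simp only [Finset.mem_Icc] at hk; omega)) (pow_pos hξ _)
    · exact ⟨1, Finset.mem_Icc.mpr ⟨le_refl 1, by omega⟩⟩
  have hA : 0 < Ap n a ξ := by rw [Ap]; positivity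
  have hC : 0 < Cp n a ξ := by
    rw [Cp]; apply mul_pos (mul_pos hξ (by positivity)) homsum
  have hΔ : Dlt n a ξ ≠ 0 := by
    intro h
    apply hne
    rw [Dlt] at h
    rw [xistar]
    have hom1' : om1 n a ≠ 0 := ne_of_gt hom1
    have hom3' : om3 n a ≠ 0 := ne_of_gt hom3
    have ha1' : av n a 1 ≠ 0 := ne_of_gt ha1
    field_simp at h ⊢
    linear_combination h
  rw [thetaFun, Pp]
  exact key_abstract _ _ _ _ _ hA hC hΔ

end Phos
end
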